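/- Let W ⊆ {0,...,n} be nonempty with every maximal run of consecutive integers in W of length at most l (l ≥ 1). Then the height function h satisfies (2l/(2l-1))^{h(W)-1} ≤ |W|; consequently h(W) ≤ 1 + 2l·log n for n ≥ 2. -/

import Mathlib

open Finset

/-- `M - 1 = {m-1 : m ∈ M, m ≥ 1}`. -/
def shiftDown (M : Finset ℕ) : Finset ℕ := (M.filter (1 ≤ ·)).image (· - 1)

/-- `h` satisfies the recursion defining the height function of Mubayi–Rödl:
`h(∅) = 0` and, for `L ≠ ∅`,
`h(L) = 1 + max_{M ∈ S(L)} min {h(L ∩ M), h(L ∩ (M-1))}` where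
`S(L) = {M ⊆ ℕ finite : M ≠ L, 0 < |M| ≤ |L|}`. -/
def IsHeightRec (h : Finset ℕ → ℕ) : Prop :=
  h ∅ = 0 ∧ ∀ L : Finset ℕ, L ≠ ∅ →
    h L = 1 + sSup {k : ℕ | ∃ M : Finset ℕ, M ≠ L ∧ 0 < M.card ∧ M.card ≤ L.card ∧
      k = min (h (L ∩ M)) (h (L ∩ shiftDown M))}

/-!
Take `M` attaining the maximum in the recursion for `h L`, and let `C` be the smaller of
`L ∩ M` and `L ∩ (M - 1)`, so that `h L ≤ 1 + h C`. Shifting `L ∩ (M - 1)` up by one, both pieces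
lie in `M`, and they can only overlap in elements of `L` that do not start a run of `L`; as
`|M| ≤ |L|`, this gives `|L ∩ M| + |L ∩ (M - 1)| + s ≤ 2|L|` with `s` the number of runs of `L`.
Runs have length at most `l`, so `|L| ≤ l s` and `|C| ≤ (1 - 1/(2l)) |L|`; induction on `L` gives
`(2l/(2l-1))^(h L - 1) ≤ |L|`. The logarithmic form follows from `log (2l/(2l-1)) ≥ 1/(2l)`
and `|W| ≤ n + 1`, except for `n = 2`, where `h W ≤ |W| ≤ 3` suffices.
-/

def RunsAtMost (l : ℕ) (L : Finset ℕ) : Prop := ∀ a, ∃ k ≤ l, a + k ∉ L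

def runStarts (L : Finset ℕ) : Finset ℕ := L \ L.image (· + 1)

lemma mem_shiftDown {M : Finset ℕ} {x : ℕ} : x ∈ shiftDown M ↔ x + 1 ∈ M := by
  simp only [shiftDown, mem_image, mem_filter]
  constructor
  · rintro ⟨y, ⟨hyM, hy1⟩, rfl⟩
    rwa [Nat.sub_add_cancel hy1]
  · exact fun hx => ⟨x + 1, ⟨hx, by omega⟩, rfl⟩

namespace RunsAtMost

variable {l : ℕ} {L W : Finset ℕ}

lemma mono (hrun : RunsAtMost l W) (hLW : L ⊆ W) : RunsAtMost l L := fun a =>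
  let ⟨k, hkl, hk⟩ := hrun a
  ⟨k, hkl, fun hkL => hk (hLW hkL)⟩

lemma pos (hrun : RunsAtMost l L) (hL : L.Nonempty) : 0 < l := by
  obtain ⟨a, ha⟩ := hL
  obtain ⟨k, hkl, hk⟩ := hrun a
  rcases Nat.eq_zero_or_pos k with rfl | hk0
  · exact absurd ha hk
  · omega

lemma subset_biUnion_runStarts (hrun : RunsAtMost l L) :
    L ⊆ (runStarts L).biUnion fun s => Ico s (s + l) := by
  intro x hx
  have hex : ∃ s, Icc s x ⊆ L := ⟨x, by simpa using hx⟩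
  -- `s` is the start of the run of `L` through `x`
  set s := Nat.find hex
  have hs : Icc s x ⊆ L := Nat.find_spec hex
  have hsx : s ≤ x := Nat.find_min' hex (by simpa using hx)
  refine mem_biUnion.mpr ⟨s, ?_, ?_⟩
  · refine mem_sdiff.mpr ⟨hs (left_mem_Icc.mpr hsx), fun hmem => ?_⟩
    obtain ⟨t, htL, hts⟩ := mem_image.mp hmem
    have : Icc t x ⊆ L := fun y hy => by
      rcases eq_or_ne y t with rfl | hyt
      · exact htL
      · exact hs (by simp only [mem_Icc] at hy ⊢; omega)
    exact absurd (Nat.find_min' hex this) (by omega)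
  · obtain ⟨k, hkl, hk⟩ := hrun s
    have : x < s + k := by
      by_contra hxk
      exact hk (hs (by simp only [mem_Icc]; omega))
    simp only [mem_Ico]
    omega

lemma card_le_mul_card_runStarts (hrun : RunsAtMost l L) :
    L.card ≤ l * (runStarts L).card :=
  calc L.card ≤ ((runStarts L).biUnion fun s => Ico s (s + l)).card :=
        card_le_card hrun.subset_biUnion_runStarts
    _ ≤ ∑ s ∈ runStarts L, (Ico s (s + l)).card := card_biUnion_le
    _ = l * (runStarts L).card := by simp [mul_comm]

end RunsAtMost

lemma card_inter_add_card_inter_shiftDown_add_card_runStarts_le {L M : Finset ℕ}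
    (hM : M.card ≤ L.card) :
    (L ∩ M).card + (L ∩ shiftDown M).card + (runStarts L).card ≤ 2 * L.card := by
  set A := L ∩ M
  set B := (L ∩ shiftDown M).image (· + 1)
  have hB : B.card = (L ∩ shiftDown M).card := card_image_of_injective _ (add_left_injective 1)
  have hAB : A ∪ B ⊆ M := union_subset inter_subset_right fun y hy => by
    obtain ⟨x, hx, rfl⟩ := mem_image.mp hy
    exact mem_shiftDown.mp (mem_inter.mp hx).2
  have hAB' : A ∩ B ⊆ L ∩ L.image (· + 1) :=
    inter_subset_inter inter_subset_left (image_subset_image inter_subset_left)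
  have := card_union_add_card_inter A B
  have := card_le_card hAB
  have := card_le_card hAB'
  have := card_inter_add_card_sdiff L (L.image (· + 1))
  unfold runStarts
  omega

lemma RunsAtMost.two_mul_min_card_add_card_le {l : ℕ} {L M : Finset ℕ} (hrun : RunsAtMost l L)
    (hM : M.card ≤ L.card) :
    2 * l * min (L ∩ M).card (L ∩ shiftDown M).card + L.card ≤ 2 * l * L.card := by
  have hstarts := hrun.card_le_mul_card_runStarts
  have hsum := card_inter_add_card_inter_shiftDown_add_card_runStarts_le hM
  have hmin := min_le_left (L ∩ M).card (L ∩ shiftDown M).card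
  have hmin' := min_le_right (L ∩ M).card (L ∩ shiftDown M).card
  nlinarith

def heightCandidates (h : Finset ℕ → ℕ) (L : Finset ℕ) : Set ℕ :=
  {k : ℕ | ∃ M : Finset ℕ, M ≠ L ∧ 0 < M.card ∧ M.card ≤ L.card ∧
      k = min (h (L ∩ M)) (h (L ∩ shiftDown M))}

lemma inter_ssubset_of_ne_of_card_le {L M : Finset ℕ} (hML : M ≠ L) (hM : M.card ≤ L.card) :
    L ∩ M ⊂ L :=
  inter_subset_left.ssubset_of_ne fun hLM =>
    hML (eq_of_subset_of_card_le (inter_eq_left.mp hLM) hM).symm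

namespace IsHeightRec

variable {h : Finset ℕ → ℕ}

lemma eq_one_add_sSup (hh : IsHeightRec h) {L : Finset ℕ} (hL : L.Nonempty) :
    h L = 1 + sSup (heightCandidates h L) :=
  hh.2 L hL.ne_empty

lemma zero_mem_heightCandidates (hh : IsHeightRec h) {L : Finset ℕ} (hL : L.Nonempty) :
    0 ∈ heightCandidates h L := by
  set m := L.sup id + 2
  have hfar : ∀ x ∈ L, x + 2 ≤ m := fun x hx => by
    have : x ≤ L.sup id := le_sup (f := id) hx
    omega
  have hm : ∀ x ∈ L, x ∉ ({m} : Finset ℕ) ∧ x ∉ shiftDown {m} := fun x hx => by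
    have := hfar x hx
    simp only [mem_shiftDown, mem_singleton]
    omega
  refine ⟨{m}, fun hmL => ?_, by simp, by simpa using hL, ?_⟩
  · have := hfar m (hmL ▸ mem_singleton_self m)
    omega
  · rw [disjoint_iff_inter_eq_empty.mp (disjoint_left.mpr fun x hx => (hm x hx).1),
      disjoint_iff_inter_eq_empty.mp (disjoint_left.mpr fun x hx => (hm x hx).2), hh.1, min_self]

lemma le_card (hh : IsHeightRec h) (L : Finset ℕ) : h L ≤ L.card := by
  induction L using Finset.strongInduction with
  | H L ih =>
    rcases L.eq_empty_or_nonempty with rfl | hL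
    · simp [hh.1]
    have hbound : ∀ k ∈ heightCandidates h L, k ≤ L.card - 1 := by
      rintro k ⟨M, hML, -, hM, rfl⟩
      have hsub := inter_ssubset_of_ne_of_card_le hML hM
      have := ih _ hsub
      have := card_lt_card hsub
      have := min_le_left (h (L ∩ M)) (h (L ∩ shiftDown M))
      omega
    have := csSup_le ⟨0, hh.zero_mem_heightCandidates hL⟩ hbound
    have := hL.card_pos
    rw [hh.eq_one_add_sSup hL]
    omega

lemma exists_eq_one_add_min (hh : IsHeightRec h) {L : Finset ℕ} (hL : L.Nonempty) :
    ∃ M : Finset ℕ, M.card ≤ L.card ∧ h L = 1 + min (h (L ∩ M)) (h (L ∩ shiftDown M)) := by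
  have hbdd : BddAbove (heightCandidates h L) := ⟨L.card, by
    rintro k ⟨M, -, -, -, rfl⟩
    exact (min_le_left _ _).trans ((hh.le_card _).trans (card_le_card inter_subset_left))⟩
  obtain ⟨M, -, -, hM, hmin⟩ := Nat.sSup_mem ⟨0, hh.zero_mem_heightCandidates hL⟩ hbdd
  exact ⟨M, hM, hmin ▸ hh.eq_one_add_sSup hL⟩

end IsHeightRec

lemma IsHeightRec.pow_height_sub_one_le_card {h : Finset ℕ → ℕ} (hh : IsHeightRec h) {l : ℕ}
    {L : Finset ℕ} (hrun : RunsAtMost l L) (hL : L.Nonempty) :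
    ((2 * (l : ℝ)) / (2 * (l : ℝ) - 1)) ^ (h L - 1) ≤ (L.card : ℝ) := by
  induction L using Finset.strongInduction with
  | H L ih =>
    set c := (2 * (l : ℝ)) / (2 * (l : ℝ) - 1)
    have hl : (1 : ℝ) ≤ l := by exact_mod_cast hrun.pos hL
    have hden : (0 : ℝ) < 2 * l - 1 := by linarith
    have hc : 1 ≤ c := by rw [le_div_iff₀ hden]; linarith
    obtain ⟨M, hM, hLM⟩ := hh.exists_eq_one_add_min hL
    obtain ⟨C, hCL, hCh, hCcard⟩ :
        ∃ C ⊆ L, h L ≤ 1 + h C ∧ 2 * l * C.card + L.card ≤ 2 * l * L.card := by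
      have := hrun.two_mul_min_card_add_card_le hM
      rcases le_total (L ∩ M).card (L ∩ shiftDown M).card with hle | hle
      · exact ⟨L ∩ M, inter_subset_left, by omega, by rwa [min_eq_left hle] at this⟩
      · exact ⟨L ∩ shiftDown M, inter_subset_left, by omega, by rwa [min_eq_right hle] at this⟩
    rcases C.eq_empty_or_nonempty with rfl | hC
    · rw [hh.1] at hCh
      rw [show h L - 1 = 0 by omega, pow_zero]
      exact_mod_cast hL.card_pos
    have hCL' : C ⊂ L := hCL.ssubset_of_ne (by rintro rfl; have := hC.card_pos; omega)
    have hCcard' : 2 * (l : ℝ) * C.card ≤ (2 * l - 1) * L.card := by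
      have : ((2 * l * C.card + L.card : ℕ) : ℝ) ≤ (2 * l * L.card : ℕ) := by exact_mod_cast hCcard
      push_cast at this
      linarith
    calc c ^ (h L - 1) ≤ c ^ (h C - 1) * c := by
          rw [← pow_succ]; exact pow_le_pow_right₀ hc (by omega)
      _ ≤ C.card * c := by gcongr; exact ih C hCL' (hrun.mono hCL) hC
      _ ≤ L.card := by rw [mul_div_assoc', div_le_iff₀ hden]; linarith

namespace Real

lemma inv_le_log_div_sub_one {x : ℝ} (hx : 1 < x) : x⁻¹ ≤ log (x / (x - 1)) := by
  have := one_sub_inv_le_log_of_pos (x := x / (x - 1)) (by apply div_pos <;> linarith)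
  rwa [inv_div, one_sub_div (by positivity), sub_sub_cancel, one_div] at this

lemma le_mul_log_of_div_sub_one_pow_le {x N : ℝ} {m : ℕ} (hx : 1 < x)
    (hm : (x / (x - 1)) ^ m ≤ N) : m ≤ x * log N := by
  have hpos : 0 < (x / (x - 1)) ^ m := by apply pow_pos; apply div_pos <;> linarith
  have hlog : m * log (x / (x - 1)) ≤ log N := by
    rw [← log_pow]; exact log_le_log hpos hm
  calc (m : ℝ) = x * (m * x⁻¹) := by field_simp
    _ ≤ x * (m * log (x / (x - 1))) := by gcongr; exact inv_le_log_div_sub_one hx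
    _ ≤ x * log N := by gcongr

lemma log_add_one_le_logb_two {x : ℝ} (hx : 3 ≤ x) : log (x + 1) ≤ logb 2 x := by
  have hlog2 : 0 < log 2 := log_pos one_lt_two
  have hlog2' := log_two_lt_d9
  have hlogx : 1 ≤ log x := by
    rw [le_log_iff_exp_le (by linarith)]; linarith [exp_one_lt_three]
  have hstep : log (x + 1) ≤ log x + 1 / 3 := by
    have hquot := log_le_sub_one_of_pos (x := (x + 1) / x) (by positivity)
    have hsmall : (x + 1) / x - 1 ≤ 1 / 3 := by
      rw [div_sub_one (by positivity), div_le_iff₀ (by positivity)]; linarith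
    rw [log_div (by linarith) (by linarith)] at hquot
    linarith
  rw [logb, le_div_iff₀ hlog2]
  nlinarith

end Real

theorem stmt_13_general (h : Finset ℕ → ℕ) (hh : IsHeightRec h) (n l : ℕ)
    (W : Finset ℕ) (hW : W.Nonempty) (hWn : W ⊆ Finset.range (n + 1))
    (hrun : ∀ a : ℕ, ∃ k : ℕ, k ≤ l ∧ a + k ∉ W) :
    ((2 * (l : ℝ)) / (2 * (l : ℝ) - 1)) ^ (h W - 1) ≤ (W.card : ℝ) ∧
      (2 ≤ n → (h W : ℝ) ≤ 1 + 2 * (l : ℝ) * Real.logb 2 n) := by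
  have hpow := hh.pow_height_sub_one_le_card hrun hW
  refine ⟨hpow, fun hn => ?_⟩
  have hl : (1 : ℝ) ≤ l := by exact_mod_cast RunsAtMost.pos hrun hW
  have hcard : W.card ≤ n + 1 := (card_le_card hWn).trans (card_range _).le
  suffices ((h W - 1 : ℕ) : ℝ) ≤ 2 * l * Real.logb 2 n by
    have : (h W : ℝ) ≤ 1 + (h W - 1 : ℕ) := by norm_cast; omega
    linarith
  rcases hn.eq_or_lt with rfl | hn
  · have : h W - 1 ≤ 2 := by have := hh.le_card W; omega
    rw [Nat.cast_ofNat, Real.logb_self_eq_one one_lt_two]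
    calc ((h W - 1 : ℕ) : ℝ) ≤ 2 := by exact_mod_cast this
      _ ≤ 2 * l * 1 := by linarith
  calc ((h W - 1 : ℕ) : ℝ) ≤ 2 * l * Real.log W.card :=
        Real.le_mul_log_of_div_sub_one_pow_le (by linarith) hpow
    _ ≤ 2 * l * Real.log (n + 1) := by
        gcongr; exact_mod_cast hcard
    _ ≤ 2 * l * Real.logb 2 n := by
        gcongr; exact Real.log_add_one_le_logb_two (by exact_mod_cast hn)

/-- Proposition 2.8 of Mubayi–Rödl: if `W ⊆ {0,...,n}` is nonempty and every maximal
run of consecutive integers in `W` has length at most `l ≥ 1`, then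
`(2l/(2l-1))^{h(W)-1} ≤ |W|`, and consequently `h(W) ≤ 1 + 2l·log₂ n` for `n ≥ 2`. -/
theorem stmt_13 (h : Finset ℕ → ℕ) (hh : IsHeightRec h) (n l : ℕ) (hl : 1 ≤ l)
    (W : Finset ℕ) (hW : W.Nonempty) (hWn : W ⊆ Finset.range (n + 1))
    (hrun : ∀ a : ℕ, ∃ k : ℕ, k ≤ l ∧ a + k ∉ W) :
    ((2 * (l : ℝ)) / (2 * (l : ℝ) - 1)) ^ (h W - 1) ≤ (W.card : ℝ) ∧
      (2 ≤ n → (h W : ℝ) ≤ 1 + 2 * (l : ℝ) * Real.logb 2 n) :=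
  stmt_13_general h hh n l W hW hWn hrun
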